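/- In the example with p = 3, the third differential of the perturbed end-point map does not vanish: with g₁^t = ∂/∂x₁ + (t−1)∂/∂x₂ − 3(t−1)x₁²∂/∂x₃ evaluated along computations at q₁ = (0,1,0), one has ⟨λ, [g₁^{t₁},[g₁^{t₂},g₁^{t₃}]](q₁)⟩ = 6(t₂ − t₃) for λ = (0,0,1), and for v₁(t) = 2π sin(2πt) the iterated integral 2∫₀¹∫₀^{t₁}∫₀^{t₂} 6 v₁(t₁)v₁(t₂)v₁(t₃)(t₂−t₃) dt₃ dt₂ dt₁ = 15. -/

import Mathlib

open Real

/-- Lie bracket of vector fields on a normed space. -/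
noncomputable def vbr {E : Type*} [NormedAddCommGroup E] [NormedSpace ℝ E]
    (g h : E → E) : E → E :=
  fun x => fderiv ℝ h x (g x) - fderiv ℝ g x (h x)

/-- Euclidean pairing on `ℝ³ = ℝ × ℝ × ℝ`. -/
def dot3 (a b : ℝ × ℝ × ℝ) : ℝ := a.1 * b.1 + a.2.1 * b.2.1 + a.2.2 * b.2.2

/-- The pulled-back vector field `g₁^t = ∂/∂x₁ + (t−1)∂/∂x₂ − 3(t−1)x₁²∂/∂x₃`. -/
def gOne (t : ℝ) : ℝ × ℝ × ℝ → ℝ × ℝ × ℝ :=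
  fun x => ((1:ℝ), t - 1, -3 * (t - 1) * x.1 ^ 2)


/-!
Each `g₁^t` has Jacobian supported in the `x₁`-column with values in the `x₃`-direction, so
`[g₁^a, g₁^b] = 6(a − b) x₁ ∂/∂x₃` is a linear vertical field, and since `g₁^t` has first
component `1`, one more bracket gives the constant field `6(t₂ − t₃) ∂/∂x₃`.

The iterated integral is evaluated from the inside out by the fundamental theorem of calculus,
for `v(t) = ω sin(ωt)` with any `ω ≠ 0`; only the last step uses `sin ω = 0`, `cos ω = 1`.
-/

open ContinuousLinearMap intervalIntegral

lemma hasFDerivAt_fst₃ (x : ℝ × ℝ × ℝ) :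
    HasFDerivAt (fun y : ℝ × ℝ × ℝ => y.1) (fst ℝ ℝ (ℝ × ℝ)) x :=
  hasFDerivAt_fst

lemma fderiv_gOne_apply (t : ℝ) (x v : ℝ × ℝ × ℝ) :
    fderiv ℝ (gOne t) x v = (0, 0, -6 * (t - 1) * x.1 * v.1) := by
  have h : HasFDerivAt (gOne t) _ x := (hasFDerivAt_const 1 x).prodMk
    ((hasFDerivAt_const (t - 1) x).prodMk (((hasFDerivAt_fst₃ x).pow 2).const_mul (-3 * (t - 1))))
  simp [h.fderiv]
  ring

lemma fderiv_vertical_apply (c : ℝ) (x v : ℝ × ℝ × ℝ) :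
    fderiv ℝ (fun y : ℝ × ℝ × ℝ => ((0 : ℝ), (0 : ℝ), c * y.1)) x v = (0, 0, c * v.1) := by
  have h : HasFDerivAt (fun y : ℝ × ℝ × ℝ => ((0 : ℝ), (0 : ℝ), c * y.1)) _ x :=
    (hasFDerivAt_const 0 x).prodMk ((hasFDerivAt_const 0 x).prodMk ((hasFDerivAt_fst₃ x).const_mul c))
  simp [h.fderiv]

lemma vbr_gOne_gOne (a b : ℝ) :
    vbr (gOne a) (gOne b) = fun x => ((0 : ℝ), (0 : ℝ), 6 * (a - b) * x.1) := by
  ext x <;> simp [vbr, fderiv_gOne_apply, gOne]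
  ring

lemma vbr_gOne_vertical (a c : ℝ) (x : ℝ × ℝ × ℝ) :
    vbr (gOne a) (fun y => ((0 : ℝ), (0 : ℝ), c * y.1)) x = (0, 0, c) := by
  ext <;> simp [vbr, fderiv_gOne_apply, fderiv_vertical_apply, gOne]

lemma hasDerivAt_sin_mul (ω t : ℝ) : HasDerivAt (fun u => sin (ω * u)) (ω * cos (ω * t)) t := by
  simpa [mul_comm] using ((hasDerivAt_id t).const_mul ω).sin

lemma hasDerivAt_cos_mul (ω t : ℝ) :
    HasDerivAt (fun u => cos (ω * u)) (-(ω * sin (ω * t))) t := by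
  simpa [mul_comm] using ((hasDerivAt_id t).const_mul ω).cos

section
variable {ω : ℝ} (hω : ω ≠ 0) (K : ℝ)
include hω

lemma integral_sin_mul_sub (b : ℝ) :
    ∫ u in (0 : ℝ)..b, K * (ω * sin (ω * u)) * (b - u) = K * (b - sin (ω * b) / ω) := by
  have hF : ∀ u ∈ Set.uIcc 0 b, HasDerivAt
      (fun u => K * ((u - b) * cos (ω * u) - sin (ω * u) / ω))
      (K * (ω * sin (ω * u)) * (b - u)) u := by
    intro u _
    refine (((((hasDerivAt_id' u).sub_const b).mul (hasDerivAt_cos_mul ω u)).sub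
      ((hasDerivAt_sin_mul ω u).div_const ω)).const_mul K).congr_deriv ?_
    field_simp
    ring
  rw [integral_eq_sub_of_hasDerivAt hF ((by fun_prop : Continuous _).intervalIntegrable _ _)]
  simp
  ring

lemma integral_sin_mul_sub_sin (a : ℝ) :
    ∫ u in (0 : ℝ)..a, K * (ω * sin (ω * u)) * (u - sin (ω * u) / ω) =
      K * (sin (ω * a) / ω + sin (ω * a) * cos (ω * a) / (2 * ω) - a / 2 - a * cos (ω * a)) := by
  have hF : ∀ u ∈ Set.uIcc 0 a, HasDerivAt
      (fun u => K * (sin (ω * u) / ω + sin (ω * u) * cos (ω * u) / (2 * ω) - u / 2 -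
        u * cos (ω * u)))
      (K * (ω * sin (ω * u)) * (u - sin (ω * u) / ω)) u := by
    intro u _
    have hS := hasDerivAt_sin_mul ω u
    have hC := hasDerivAt_cos_mul ω u
    refine (((((hS.div_const ω).add ((hS.mul hC).div_const (2 * ω))).sub
      ((hasDerivAt_id' u).div_const 2)).sub ((hasDerivAt_id' u).mul hC)).const_mul K).congr_deriv ?_
    field_simp
    linear_combination K * sin_sq_add_cos_sq (ω * u)
  rw [integral_eq_sub_of_hasDerivAt hF ((by fun_prop : Continuous _).intervalIntegrable _ _)]
  simp

lemma integral_sin_mul_sin_add_sub_mul_cos (hs : sin ω = 0) (hc : cos ω = 1) :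
    ∫ t in (0 : ℝ)..1, K * (ω * sin (ω * t)) *
      (sin (ω * t) / ω + sin (ω * t) * cos (ω * t) / (2 * ω) - t / 2 - t * cos (ω * t)) =
      5 / 4 * K := by
  have hF : ∀ t ∈ Set.uIcc (0 : ℝ) 1, HasDerivAt
      (fun t => K * (3 * t / 4 - t * sin (ω * t) ^ 2 / 2 + t * cos (ω * t) / 2 -
        3 * sin (ω * t) * cos (ω * t) / (4 * ω) - sin (ω * t) / (2 * ω) +
        sin (ω * t) ^ 3 / (6 * ω)))
      (K * (ω * sin (ω * t)) *
        (sin (ω * t) / ω + sin (ω * t) * cos (ω * t) / (2 * ω) - t / 2 - t * cos (ω * t))) t := by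
    intro t _
    have hS := hasDerivAt_sin_mul ω t
    have hC := hasDerivAt_cos_mul ω t
    have hId := hasDerivAt_id' t
    refine ((((((((hId.const_mul 3).div_const 4).sub ((hId.mul (hS.pow 2)).div_const 2)).add
      ((hId.mul hC).div_const 2)).sub (((hS.const_mul 3).mul hC).div_const (4 * ω))).sub
      (hS.div_const (2 * ω))).add ((hS.pow 3).div_const (6 * ω))).const_mul K).congr_deriv ?_
    simp only [Pi.pow_apply]
    field_simp
    linear_combination -36 * K * sin_sq_add_cos_sq (ω * t)
  rw [integral_eq_sub_of_hasDerivAt hF ((by fun_prop : Continuous _).intervalIntegrable _ _)]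
  simp [hs, hc]
  ring

end

/-- in the example with `p = 3`,
`⟨λ,[g₁^{t₁},[g₁^{t₂},g₁^{t₃}]](q₁)⟩ = 6(t₂−t₃)` at `q₁ = (0,1,0)` for
`λ = (0,0,1)`, and for `v(t) = 2π sin(2πt)` the iterated integral
`2∫₀¹∫₀^{t₁}∫₀^{t₂} 6v(t₁)v(t₂)v(t₃)(t₂−t₃) dt₃dt₂dt₁` equals `15`. -/
theorem third_differential_nonvanishing_example :
    (∀ t₁ t₂ t₃ : ℝ,
      dot3 ((0:ℝ), (0:ℝ), (1:ℝ))
        (vbr (gOne t₁) (vbr (gOne t₂) (gOne t₃)) ((0:ℝ), (1:ℝ), (0:ℝ))) =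
        6 * (t₂ - t₃)) ∧
    (2 * ∫ t₁ in (0:ℝ)..1, ∫ t₂ in (0:ℝ)..t₁, ∫ t₃ in (0:ℝ)..t₂,
        6 * (2 * π * sin (2 * π * t₁)) * (2 * π * sin (2 * π * t₂)) *
          (2 * π * sin (2 * π * t₃)) * (t₂ - t₃)) = 15 := by
  refine ⟨fun t₁ t₂ t₃ => ?_, ?_⟩
  · simp [vbr_gOne_gOne, vbr_gOne_vertical, dot3]
  · have h2π : 2 * π ≠ 0 := by positivity
    simp only [integral_sin_mul_sub h2π, integral_sin_mul_sub_sin h2π,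
      integral_sin_mul_sin_add_sub_mul_cos h2π _ sin_two_pi cos_two_pi]
    norm_num
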